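/- arXiv:1809.07816 — 2 statements merged into one kernel-verified Lean document; each statement's English description precedes it below -/
import Mathlib

section
/- Let n ≥ 2, let ω, ω' be members of {β_1⁻,…,β_{n−1}⁻, β, β_1⁺,…,β_{n−1}⁺}, and let S be a subalgebra of Z_{2n}² which is maximal with respect to inclusion among subalgebras of Z_{2n}² contained in (ω, ω')⁻¹(≤). Then there exist a partial endomorphism h of Z_{2n} and an integer m with 0 ≤ m ≤ n such that S = {(x,y) : x ∈ dom h and h(x) ≈_m y} or S = {(x,y) : y ∈ dom h and h(y) ≈_m x}. Moreover, if ω ∈ {β_1⁻,…,β_{n−1}⁻, β} and ω' ∈ {β, β_1⁺,…,β_{n−1}⁺}, then S is the graph of a partial endomorphism of Z_{2n} (the case m = 0). -/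
/-- Sugihara implication on the integers. -/
def SImp (a b : ℤ) : ℤ := if a ≤ b then max (-a) b else min (-a) b

/-- The universe of the Sugihara algebra `Z_{2n+1}`. -/
def Zodd (n : ℕ) : Set ℤ := {a : ℤ | -(n : ℤ) ≤ a ∧ a ≤ (n : ℤ)}

/-- The universe of the Sugihara algebra `Z_{2n}`. -/
def Zeven (n : ℕ) : Set ℤ := {a : ℤ | (-(n : ℤ) ≤ a ∧ a ≤ (n : ℤ)) ∧ a ≠ 0}

/-- `S` is a subalgebra of (the subset `Z` of) the Sugihara algebra on `ℤ`. -/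
def Subalg (Z S : Set ℤ) : Prop :=
  S.Nonempty ∧ S ⊆ Z ∧
    ∀ a ∈ S, ∀ b ∈ S, min a b ∈ S ∧ max a b ∈ S ∧ -a ∈ S ∧ SImp a b ∈ S

/-- `h` is a homomorphism from `S` to `T` (preserving ∧, ∨, ¬, →). -/
def SHom (S T : Set ℤ) (h : ℤ → ℤ) : Prop :=
  Set.MapsTo h S T ∧
    ∀ a ∈ S, ∀ b ∈ S,
      h (min a b) = min (h a) (h b) ∧ h (max a b) = max (h a) (h b) ∧
      h (-a) = -h a ∧ h (SImp a b) = SImp (h a) (h b)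

/-- `h` with domain `D` is a partial endomorphism of (the algebra on) `Z`. -/
def PartialEnd (Z D : Set ℤ) (h : ℤ → ℤ) : Prop :=
  Subalg Z D ∧ Subalg Z (h '' D) ∧ SHom D (h '' D) h

/-- The relation `≈_m`. -/
def eqm (m : ℕ) (a b : ℤ) : Prop := a = b ∨ (|a| ≤ (m : ℤ) ∧ |b| ≤ (m : ℤ))

/-- `S` is a subalgebra of `Z²` (coordinatewise operations). -/
def Subalg2 (Z : Set ℤ) (S : Set (ℤ × ℤ)) : Prop :=
  S.Nonempty ∧ S ⊆ Z ×ˢ Z ∧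
    ∀ p ∈ S, ∀ q ∈ S,
      (min p.1 q.1, min p.2 q.2) ∈ S ∧ (max p.1 q.1, max p.2 q.2) ∈ S ∧
      (-p.1, -p.2) ∈ S ∧ (SImp p.1 q.1, SImp p.2 q.2) ∈ S

/-- The map `β_i⁻`. -/
def betaM (i : ℕ) (a : ℤ) : ℤ := if -(i : ℤ) ≤ a then 1 else 0

/-- The map `β_i⁺`. -/
def betaP (i : ℕ) (a : ℤ) : ℤ := if (i : ℤ) < a then 1 else 0

/-- The map `β`. -/
def betaF (a : ℤ) : ℤ := if 0 < a then 1 else 0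

/-- `ω` is one of the maps `β_1⁻, …, β_{n-1}⁻`. -/
def IsBetaM (n : ℕ) (ω : ℤ → ℤ) : Prop := ∃ i : ℕ, 1 ≤ i ∧ i ≤ n - 1 ∧ ω = betaM i

/-- `ω` is one of the maps `β_1⁺, …, β_{n-1}⁺`. -/
def IsBetaP (n : ℕ) (ω : ℤ → ℤ) : Prop := ∃ i : ℕ, 1 ≤ i ∧ i ≤ n - 1 ∧ ω = betaP i

/-- `ω` is a member of `{β_1⁻, …, β_{n-1}⁻, β, β_1⁺, …, β_{n-1}⁺}`. -/
def IsBeta (n : ℕ) (ω : ℤ → ℤ) : Prop := ω = betaF ∨ IsBetaM n ω ∨ IsBetaP n ω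

/-!
Let `m` be the largest `k` such that `k` and `-k` lie in a common fibre `{y | (x, y) ∈ S}`.
Playing the Sugihara implication off against pairs of elements of `S` shows that a fibre
containing an element of absolute value `> m` is a singleton, and that these big pairs form the
graph `G` of an odd order isomorphism whose domain lies, in absolute value, strictly above every
`x` with a small fibre; let `a` be the largest such `|x|`. Then `G ∪ Z_{2a} × Z_{2m}` is again a
subalgebra, and it still lies in `(ω, ω')⁻¹(≤)` because the `β`s are characteristic functions of
up-sets, so by maximality it is `S`. If `a ≤ m` this is `{(x, y) | h x ≈_m y}` for `h` the graph
map extended by the identity on `Z_{2a}`; if `m < a`, the same holds after swapping coordinates.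
Under the extra hypothesis a pair `(x, -m)` with `x > 0` would violate the constraint, so `m = 0`
and `S = G`.
-/

open Set

lemma mem_Zeven_iff {n : ℕ} {a : ℤ} : a ∈ Zeven n ↔ a ≠ 0 ∧ |a| ≤ n := by
  simp only [Zeven, mem_ofPred_eq, abs_le]
  tauto

lemma Zeven_zero : Zeven 0 = ∅ := by
  ext a
  simp only [mem_Zeven_iff, Nat.cast_zero, abs_nonpos_iff, mem_empty_iff_false, iff_false]
  tauto

lemma Zeven_mono {k n : ℕ} (h : k ≤ n) : Zeven k ⊆ Zeven n := fun a ha => by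
  rw [mem_Zeven_iff] at ha ⊢
  exact ⟨ha.1, ha.2.trans (by exact_mod_cast h)⟩

lemma natAbs_le_of_mem_Zeven {n : ℕ} {a : ℤ} (ha : a ∈ Zeven n) : a.natAbs ≤ n := by
  have := (mem_Zeven_iff.1 ha).2
  rw [← Int.natCast_natAbs] at this
  exact_mod_cast this

lemma neg_mem_Zeven {n : ℕ} {a : ℤ} (ha : a ∈ Zeven n) : -a ∈ Zeven n := by
  rw [mem_Zeven_iff, neg_ne_zero, abs_neg] at *
  exact ha

section SImp

variable {a b : ℤ}

lemma SImp_self (a : ℤ) : SImp a a = |a| := by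
  unfold SImp; grind

lemma SImp_eq_right_of_abs_lt (h : |a| < |b|) : SImp a b = b := by
  unfold SImp; grind

lemma SImp_eq_neg_left_of_abs_lt (h : |b| < |a|) : SImp a b = -a := by
  unfold SImp; grind

lemma SImp_eq_right_of_abs_le_of_ne (h : |a| ≤ |b|) (hne : a ≠ b) : SImp a b = b := by
  unfold SImp; grind

lemma SImp_eq_neg_left_of_abs_le_of_ne (h : |b| ≤ |a|) (hne : a ≠ b) : SImp a b = -a := by
  unfold SImp; grind

lemma SImp_eq_right_of_abs_le_of_nonneg (h : |a| ≤ |b|) (hb : 0 ≤ b) : SImp a b = b := by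
  unfold SImp; grind

lemma SImp_mem {A : Set ℤ} (hA : ∀ a ∈ A, -a ∈ A) (ha : a ∈ A) (hb : b ∈ A) : SImp a b ∈ A := by
  have : SImp a b = a ∨ SImp a b = -a ∨ SImp a b = b := by unfold SImp; grind
  rcases this with h | h | h <;> rw [h]
  exacts [ha, hA a ha, hb]

end SImp

lemma subalg_of_neg_mem {Z D : Set ℤ} (hne : D.Nonempty) (hDZ : D ⊆ Z)
    (hneg : ∀ a ∈ D, -a ∈ D) : Subalg Z D :=
  ⟨hne, hDZ, fun _ ha _ hb =>
    ⟨min_rec' (· ∈ D) ha hb, max_rec' (· ∈ D) ha hb, hneg _ ha, SImp_mem hneg ha hb⟩⟩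

lemma partialEnd_of_strictMonoOn {Z D : Set ℤ} {h : ℤ → ℤ} (hne : D.Nonempty) (hDZ : D ⊆ Z)
    (hneg : ∀ a ∈ D, -a ∈ D) (hmaps : MapsTo h D Z) (hmono : StrictMonoOn h D)
    (hodd : ∀ a ∈ D, h (-a) = -h a) : PartialEnd Z D h := by
  have hneg' : ∀ b ∈ h '' D, -b ∈ h '' D := by
    rintro _ ⟨a, ha, rfl⟩
    exact ⟨-a, hneg a ha, hodd a ha⟩
  refine ⟨subalg_of_neg_mem hne hDZ hneg,
    subalg_of_neg_mem (hne.image h) (image_subset_iff.2 hmaps) hneg', mapsTo_image h D,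
    fun a ha b hb => ⟨hmono.monotoneOn.map_min ha hb, hmono.monotoneOn.map_max ha hb,
      hodd a ha, ?_⟩⟩
  simp only [SImp, hmono.le_iff_le ha hb]
  split_ifs
  · rw [hmono.monotoneOn.map_max (hneg a ha) hb, hodd a ha]
  · rw [hmono.monotoneOn.map_min (hneg a ha) hb, hodd a ha]

/-- The maximal subalgebras turn out to be of the form `G ∪ Zeven a ×ˢ Zeven m` for such a `G`. -/
structure IsOddMonoGraph (n a m : ℕ) (G : Set (ℤ × ℤ)) : Prop where
  subset : G ⊆ Zeven n ×ˢ Zeven n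
  neg_mem : ∀ p ∈ G, -p ∈ G
  lt_abs_fst : ∀ p ∈ G, (a : ℤ) < |p.1|
  lt_abs_snd : ∀ p ∈ G, (m : ℤ) < |p.2|
  lt_iff_lt : ∀ p ∈ G, ∀ q ∈ G, p.1 < q.1 ↔ p.2 < q.2

/-- Off the domain of `G` this is the identity, which is how the block `Zeven a` of the domain
is handled. -/
noncomputable def graphFun (G : Set (ℤ × ℤ)) (x : ℤ) : ℤ := by
  classical
  exact if hx : ∃ y, (x, y) ∈ G then hx.choose else x

lemma graphFun_mem {G : Set (ℤ × ℤ)} {x : ℤ} (hx : x ∈ Prod.fst '' G) : (x, graphFun G x) ∈ G := by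
  have hx' : ∃ y, (x, y) ∈ G := by
    obtain ⟨p, hp, rfl⟩ := hx
    exact ⟨p.2, hp⟩
  simp only [graphFun, dif_pos hx']
  exact hx'.choose_spec

lemma graphFun_of_notMem {G : Set (ℤ × ℤ)} {x : ℤ} (hx : x ∉ Prod.fst '' G) : graphFun G x = x := by
  have hx' : ¬∃ y, (x, y) ∈ G := fun ⟨y, hy⟩ => hx ⟨(x, y), hy, rfl⟩
  simp only [graphFun, dif_neg hx']

namespace IsOddMonoGraph

variable {n a m : ℕ} {G : Set (ℤ × ℤ)}

lemma swap (hG : IsOddMonoGraph n a m G) : IsOddMonoGraph n m a (Prod.swap ⁻¹' G) where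
  subset _ hp := (hG.subset hp).symm
  neg_mem _ hp := hG.neg_mem _ hp
  lt_abs_fst _ hp := hG.lt_abs_snd _ hp
  lt_abs_snd _ hp := hG.lt_abs_fst _ hp
  lt_iff_lt _ hp _ hq := (hG.lt_iff_lt _ hp _ hq).symm

lemma mono (hG : IsOddMonoGraph n a m G) {a' m' : ℕ} (ha : a' ≤ a) (hm : m' ≤ m) :
    IsOddMonoGraph n a' m' G where
  subset := hG.subset
  neg_mem := hG.neg_mem
  lt_abs_fst p hp := lt_of_le_of_lt (by exact_mod_cast ha) (hG.lt_abs_fst p hp)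
  lt_abs_snd p hp := lt_of_le_of_lt (by exact_mod_cast hm) (hG.lt_abs_snd p hp)
  lt_iff_lt := hG.lt_iff_lt

lemma pos_iff_pos (hG : IsOddMonoGraph n a m G) {p : ℤ × ℤ} (hp : p ∈ G) : 0 < p.1 ↔ 0 < p.2 := by
  have := hG.lt_iff_lt _ (hG.neg_mem p hp) p hp
  simp only [Prod.fst_neg, Prod.snd_neg, neg_lt_self_iff] at this
  exact this

lemma graphFun_eq (hG : IsOddMonoGraph n a m G) {p : ℤ × ℤ} (hp : p ∈ G) :
    graphFun G p.1 = p.2 := by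
  have hq := graphFun_mem ⟨p, hp, rfl⟩
  have h1 := hG.lt_iff_lt _ hp _ hq
  have h2 := hG.lt_iff_lt _ hq _ hp
  simp only [lt_self_iff_false, false_iff, not_lt] at h1 h2
  exact le_antisymm h1 h2

lemma mem_iff (hG : IsOddMonoGraph n a m G) {x y : ℤ} :
    (x, y) ∈ G ↔ x ∈ Prod.fst '' G ∧ y = graphFun G x :=
  ⟨fun hp => ⟨⟨_, hp, rfl⟩, (hG.graphFun_eq hp).symm⟩, fun ⟨hx, hy⟩ => hy ▸ graphFun_mem hx⟩

lemma graphFun_of_mem_Zeven (hG : IsOddMonoGraph n a m G) {x : ℤ} (hx : x ∈ Zeven a) :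
    graphFun G x = x := by
  refine graphFun_of_notMem ?_
  rintro ⟨p, hp, rfl⟩
  exact (hG.lt_abs_fst p hp).not_ge (mem_Zeven_iff.1 hx).2

lemma strictMonoOn_graphFun (hG : IsOddMonoGraph n a m G) (ham : a ≤ m) :
    StrictMonoOn (graphFun G) (Prod.fst '' G ∪ Zeven a) := by
  have ham' : (a : ℤ) ≤ m := by exact_mod_cast ham
  rintro _ (⟨p, hp, rfl⟩ | hx) _ (⟨q, hq, rfl⟩ | hy) hxy
  · rw [hG.graphFun_eq hp, hG.graphFun_eq hq]
    exact (hG.lt_iff_lt p hp q hq).1 hxy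
  · rw [hG.graphFun_eq hp, hG.graphFun_of_mem_Zeven hy]
    have := hG.pos_iff_pos hp
    have := hG.lt_abs_fst p hp
    have := hG.lt_abs_snd p hp
    rw [mem_Zeven_iff] at hy
    grind
  · rw [hG.graphFun_eq hq, hG.graphFun_of_mem_Zeven hx]
    have := hG.pos_iff_pos hq
    have := hG.lt_abs_fst q hq
    have := hG.lt_abs_snd q hq
    rw [mem_Zeven_iff] at hx
    grind
  · rwa [hG.graphFun_of_mem_Zeven hx, hG.graphFun_of_mem_Zeven hy]

lemma partialEnd (hG : IsOddMonoGraph n a m G) (ham : a ≤ m) (hmn : m ≤ n)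
    (hne : (G ∪ Zeven a ×ˢ Zeven m).Nonempty) :
    PartialEnd (Zeven n) (Prod.fst '' G ∪ Zeven a) (graphFun G) := by
  have han : Zeven a ⊆ Zeven n := Zeven_mono (ham.trans hmn)
  refine partialEnd_of_strictMonoOn ?_ ?_ ?_ ?_ (hG.strictMonoOn_graphFun ham) ?_
  · obtain ⟨p, hp | hp⟩ := hne
    exacts [⟨p.1, Or.inl ⟨p, hp, rfl⟩⟩, ⟨p.1, Or.inr hp.1⟩]
  · rintro _ (⟨p, hp, rfl⟩ | hx)
    exacts [(hG.subset hp).1, han hx]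
  · rintro _ (⟨p, hp, rfl⟩ | hx)
    exacts [Or.inl ⟨-p, hG.neg_mem p hp, rfl⟩, Or.inr (neg_mem_Zeven hx)]
  · rintro _ (⟨p, hp, rfl⟩ | hx)
    · rw [hG.graphFun_eq hp]
      exact (hG.subset hp).2
    · rw [hG.graphFun_of_mem_Zeven hx]
      exact han hx
  · rintro _ (⟨p, hp, rfl⟩ | hx)
    · rw [hG.graphFun_eq hp]
      exact hG.graphFun_eq (hG.neg_mem p hp)
    · rw [hG.graphFun_of_mem_Zeven hx, hG.graphFun_of_mem_Zeven (neg_mem_Zeven hx)]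

lemma union_eq (hG : IsOddMonoGraph n a m G) (ham : a ≤ m) (hmn : m ≤ n) :
    G ∪ Zeven a ×ˢ Zeven m = {p : ℤ × ℤ | p.1 ∈ Zeven n ∧ p.2 ∈ Zeven n ∧
      p.1 ∈ Prod.fst '' G ∪ Zeven a ∧ eqm m (graphFun G p.1) p.2} := by
  ext ⟨x, y⟩
  constructor
  · rintro (hp | ⟨hx, hy⟩)
    · exact ⟨(hG.subset hp).1, (hG.subset hp).2, Or.inl ⟨_, hp, rfl⟩,
        Or.inl (hG.graphFun_eq hp)⟩
    · refine ⟨Zeven_mono (ham.trans hmn) hx, Zeven_mono hmn hy, Or.inr hx, Or.inr ?_⟩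
      rw [hG.graphFun_of_mem_Zeven hx]
      exact ⟨(mem_Zeven_iff.1 hx).2.trans (by exact_mod_cast ham), (mem_Zeven_iff.1 hy).2⟩
  · rintro ⟨-, hy, hx | hx, hxy⟩
    · left
      rw [hG.mem_iff]
      refine ⟨hx, (hxy.resolve_right fun h => ?_).symm⟩
      exact (hG.lt_abs_snd _ (graphFun_mem hx)).not_ge h.1
    · right
      refine ⟨hx, ?_⟩
      rw [hG.graphFun_of_mem_Zeven hx] at hxy
      rw [mem_Zeven_iff] at hx hy ⊢
      have : (a : ℤ) ≤ m := by exact_mod_cast ham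
      unfold eqm at hxy
      grind

lemma exists_form (hG : IsOddMonoGraph n a m G) (ha : a ≤ n) (hm : m ≤ n)
    (hne : (G ∪ Zeven a ×ˢ Zeven m).Nonempty) :
    ∃ D : Set ℤ, ∃ h : ℤ → ℤ, ∃ k : ℕ, k ≤ n ∧ PartialEnd (Zeven n) D h ∧
      (G ∪ Zeven a ×ˢ Zeven m =
          {p : ℤ × ℤ | p.1 ∈ Zeven n ∧ p.2 ∈ Zeven n ∧ p.1 ∈ D ∧ eqm k (h p.1) p.2} ∨
        G ∪ Zeven a ×ˢ Zeven m =
          {p : ℤ × ℤ | p.1 ∈ Zeven n ∧ p.2 ∈ Zeven n ∧ p.2 ∈ D ∧ eqm k (h p.2) p.1}) := by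
  rcases le_total a m with ham | hma
  · exact ⟨_, _, m, hm, hG.partialEnd ham hm hne, Or.inl (hG.union_eq ham hm)⟩
  have hswap : Prod.swap ⁻¹' (G ∪ Zeven a ×ˢ Zeven m) = Prod.swap ⁻¹' G ∪ Zeven m ×ˢ Zeven a := by
    rw [preimage_union, preimage_swap_prod]
  refine ⟨_, _, a, ha,
    hG.swap.partialEnd hma ha (hswap ▸ hne.preimage Prod.swap_surjective), Or.inr ?_⟩
  ext ⟨x, y⟩
  have := Set.ext_iff.1 (hswap.trans (hG.swap.union_eq hma ha)) (y, x)
  simp only [mem_preimage, Prod.swap_prod_mk, mem_ofPred_eq] at this ⊢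
  rw [this]
  tauto

lemma exists_graph (hG : IsOddMonoGraph n a 0 G) (hne : G.Nonempty) :
    ∃ D : Set ℤ, ∃ h : ℤ → ℤ, PartialEnd (Zeven n) D h ∧
      G = {p : ℤ × ℤ | p.1 ∈ D ∧ p.2 = h p.1} := by
  have hG₀ := hG.mono (Nat.zero_le a) le_rfl
  refine ⟨_, _, hG₀.partialEnd le_rfl (Nat.zero_le n) (by simpa [Zeven_zero] using hne), ?_⟩
  ext ⟨x, y⟩
  rw [hG.mem_iff, Zeven_zero, union_empty]
  rfl

end IsOddMonoGraph

def OpsMem (X : Set (ℤ × ℤ)) (p q : ℤ × ℤ) : Prop :=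
  p ⊓ q ∈ X ∧ p ⊔ q ∈ X ∧ -p ∈ X ∧ (SImp p.1 q.1, SImp p.2 q.2) ∈ X

/-- `Subalg2 Z S` unfolds to `S.Nonempty ∧ S ⊆ Z ×ˢ Z ∧ OpClosed S`. -/
def OpClosed (X : Set (ℤ × ℤ)) : Prop := ∀ p ∈ X, ∀ q ∈ X, OpsMem X p q

lemma OpsMem.mono {X Y : Set (ℤ × ℤ)} {p q : ℤ × ℤ} (h : OpsMem X p q) (hXY : X ⊆ Y) :
    OpsMem Y p q :=
  ⟨hXY h.1, hXY h.2.1, hXY h.2.2.1, hXY h.2.2.2⟩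

lemma opClosed_prod {A B : Set ℤ} (hA : ∀ a ∈ A, -a ∈ A) (hB : ∀ b ∈ B, -b ∈ B) :
    OpClosed (A ×ˢ B) := fun _ hp _ hq =>
  ⟨⟨min_rec' (· ∈ A) hp.1 hq.1, min_rec' (· ∈ B) hp.2 hq.2⟩,
    ⟨max_rec' (· ∈ A) hp.1 hq.1, max_rec' (· ∈ B) hp.2 hq.2⟩, ⟨hA _ hp.1, hB _ hp.2⟩,
    ⟨SImp_mem hA hp.1 hq.1, SImp_mem hB hp.2 hq.2⟩⟩

lemma OpClosed.union {A B : Set (ℤ × ℤ)} (hA : OpClosed A) (hB : OpClosed B)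
    (hdom : ∀ p ∈ A, ∀ q ∈ B, |q.1| < |p.1| ∧ |q.2| < |p.2| ∧ (0 < p.1 ↔ 0 < p.2)) :
    OpClosed (A ∪ B) := by
  have mixed : ∀ p ∈ A, ∀ q ∈ B, OpsMem (A ∪ B) p q ∧ OpsMem (A ∪ B) q p := by
    intro p hp q hq
    obtain ⟨h₁, h₂, hpos⟩ := hdom p hp q hq
    have hpq : (SImp p.1 q.1, SImp p.2 q.2) = -p :=
      Prod.ext (SImp_eq_neg_left_of_abs_lt h₁) (SImp_eq_neg_left_of_abs_lt h₂)
    have hqp : (SImp q.1 p.1, SImp q.2 p.2) = p :=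
      Prod.ext (SImp_eq_right_of_abs_lt h₁) (SImp_eq_right_of_abs_lt h₂)
    have hcomp : q ≤ p ∨ p ≤ q := by
      simp only [Prod.le_def]
      grind
    have hp' : -p ∈ A ∪ B := Or.inl (hA p hp p hp).2.2.1
    have hq' : -q ∈ A ∪ B := Or.inr (hB q hq q hq).2.2.1
    rw [OpsMem, OpsMem, hpq, hqp]
    rcases hcomp with h | h
    · rw [inf_eq_right.2 h, sup_eq_left.2 h, inf_eq_left.2 h, sup_eq_right.2 h]
      exact ⟨⟨Or.inr hq, Or.inl hp, hp', hp'⟩, ⟨Or.inr hq, Or.inl hp, hq', Or.inl hp⟩⟩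
    · rw [inf_eq_left.2 h, sup_eq_right.2 h, inf_eq_right.2 h, sup_eq_left.2 h]
      exact ⟨⟨Or.inl hp, Or.inr hq, hp', hp'⟩, ⟨Or.inl hp, Or.inr hq, hq', Or.inl hp⟩⟩
  rintro p (hp | hp) q (hq | hq)
  · exact (hA p hp q hq).mono subset_union_left
  · exact (mixed p hp q hq).1
  · exact (mixed q hq p hp).2
  · exact (hB p hp q hq).mono subset_union_right

section Subalgebra

variable {n : ℕ} {S : Set (ℤ × ℤ)}

open Classical in
/-- The `m` of the theorem: the largest `k` such that `k` and `-k` lie in a common fibre of `S`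
(`0` if there is none). -/
noncomputable def spread (n : ℕ) (S : Set (ℤ × ℤ)) : ℕ :=
  Nat.findGreatest (fun k : ℕ => ∃ x, (x, (k : ℤ)) ∈ S ∧ (x, -(k : ℤ)) ∈ S) n

open Classical in
noncomputable def smallBound (n : ℕ) (S : Set (ℤ × ℤ)) : ℕ :=
  Nat.findGreatest
    (fun k : ℕ => (∃ y, ((k : ℤ), y) ∈ S) ∧ ∀ y, ((k : ℤ), y) ∈ S → |y| ≤ spread n S) n

lemma spread_le : spread n S ≤ n := by
  classical
  exact Nat.findGreatest_le n

lemma smallBound_le : smallBound n S ≤ n := by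
  classical
  exact Nat.findGreatest_le n

def bigPart (n : ℕ) (S : Set (ℤ × ℤ)) : Set (ℤ × ℤ) := {p ∈ S | (spread n S : ℤ) < |p.2|}

namespace Subalg2

variable {x x' y y' : ℤ}

lemma ne_zero (hS : Subalg2 (Zeven n) S) (h : (x, y) ∈ S) : x ≠ 0 ∧ y ≠ 0 :=
  ⟨(mem_Zeven_iff.1 (hS.2.1 h).1).1, (mem_Zeven_iff.1 (hS.2.1 h).2).1⟩

lemma neg_mem (hS : Subalg2 (Zeven n) S) (h : (x, y) ∈ S) : (-x, -y) ∈ S :=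
  (hS.2.2 _ h _ h).2.2.1

lemma SImp_mem (hS : Subalg2 (Zeven n) S) (h : (x, y) ∈ S) (h' : (x', y') ∈ S) :
    (SImp x x', SImp y y') ∈ S :=
  (hS.2.2 _ h _ h').2.2.2

lemma abs_mem (hS : Subalg2 (Zeven n) S) (h : (x, y) ∈ S) : (|x|, |y|) ∈ S := by
  simpa only [SImp_self] using hS.SImp_mem h h

lemma abs_le_spread (hS : Subalg2 (Zeven n) S) (h : (x, y) ∈ S) (h' : (x, -y) ∈ S) :
    |y| ≤ spread n S := by
  classical
  have hk : ∃ x, (x, ((y.natAbs : ℕ) : ℤ)) ∈ S ∧ (x, -((y.natAbs : ℕ) : ℤ)) ∈ S := by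
    rw [Int.natCast_natAbs]
    rcases abs_choice y with e | e <;> rw [e]
    exacts [⟨x, h, h'⟩, ⟨x, h', by rwa [neg_neg]⟩]
  rw [← Int.natCast_natAbs]
  exact_mod_cast Nat.le_findGreatest (natAbs_le_of_mem_Zeven (hS.2.1 h).2) hk

lemma exists_of_spread_ne_zero (hS : Subalg2 (Zeven n) S) (hm : spread n S ≠ 0) :
    ∃ x, 0 < x ∧ (x, (spread n S : ℤ)) ∈ S ∧ (x, -(spread n S : ℤ)) ∈ S := by
  classical
  obtain ⟨x, h, h'⟩ := Nat.findGreatest_of_ne_zero (m := spread n S) rfl hm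
  have hm' : (spread n S : ℤ) ≠ -spread n S := by omega
  refine ⟨|x|, abs_pos.2 (hS.ne_zero h).1, ?_, ?_⟩
  · simpa only [SImp_self, SImp_eq_right_of_abs_le_of_ne (abs_neg _).le hm'.symm, neg_neg]
      using hS.SImp_mem h' h
  · simpa only [SImp_self, SImp_eq_right_of_abs_le_of_ne (abs_neg _).ge hm']
      using hS.SImp_mem h h'

lemma abs_le_spread_of_ne (hS : Subalg2 (Zeven n) S) (h : (x, y) ∈ S) (h' : (x, y') ∈ S)
    (hne : y ≠ y') (hle : |y| ≤ |y'|) : |y'| ≤ spread n S := by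
  refine hS.abs_le_spread (x := |x|) ?_ ?_
  · simpa only [SImp_self, SImp_eq_right_of_abs_le_of_ne hle hne] using hS.SImp_mem h h'
  · simpa only [SImp_self, SImp_eq_neg_left_of_abs_le_of_ne hle hne.symm] using hS.SImp_mem h' h

lemma snd_unique_of_spread_lt (hS : Subalg2 (Zeven n) S) (h : (x, y) ∈ S)
    (hy : (spread n S : ℤ) < |y|) (h' : (x, y') ∈ S) : y' = y := by
  by_contra hne
  rcases le_total |y| |y'| with hle | hle
  · exact (hy.trans_le hle).not_ge (hS.abs_le_spread_of_ne h h' (Ne.symm hne) hle)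
  · exact hy.not_ge (hS.abs_le_spread_of_ne h' h hne hle)

lemma pos_iff_pos_of_spread_lt (hS : Subalg2 (Zeven n) S) (h : (x, y) ∈ S)
    (hy : (spread n S : ℤ) < |y|) : 0 < x ↔ 0 < y := by
  have key : ∀ {x y : ℤ}, (x, y) ∈ S → (spread n S : ℤ) < |y| → 0 < x → 0 < y := by
    intro x y h hy hx
    have habs := hS.snd_unique_of_spread_lt h hy (abs_of_pos hx ▸ hS.abs_mem h)
    rw [← habs]
    exact abs_pos.2 (hS.ne_zero h).2
  refine ⟨key h hy, fun hy₀ => ?_⟩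
  by_contra hx
  have hx₀ := (hS.ne_zero h).1
  have := key (hS.neg_mem h) (by rwa [abs_neg]) (by omega)
  omega

lemma le_of_le_of_spread_lt (hS : Subalg2 (Zeven n) S) (h : (x, y) ∈ S) (h' : (x', y') ∈ S)
    (hy' : (spread n S : ℤ) < |y'|) (hx : x ≤ x') : y ≤ y' := by
  have hmax : (x', max y y') ∈ S := max_eq_right hx ▸ (hS.2.2 _ h _ h').2.1
  exact max_eq_right_iff.1 (hS.snd_unique_of_spread_lt h' hy' hmax)

lemma fst_unique_of_spread_lt (hS : Subalg2 (Zeven n) S) (h : (x, y) ∈ S) (h' : (x', y) ∈ S)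
    (hy : (spread n S : ℤ) < |y|) : x = x' := by
  have hy' : (spread n S : ℤ) < |(|y|)| := by rwa [abs_abs]
  -- `|x| < |x'|` would put both `(-x', |y|)` and `(x', |y|)` into `S`, against the sign rule
  have key : ∀ {x x' : ℤ}, (x, y) ∈ S → (x', y) ∈ S → |x| < |x'| → False := by
    intro x x' h h' hlt
    have h₁ : (-x', |y|) ∈ S := by
      simpa only [SImp_eq_neg_left_of_abs_lt hlt, SImp_self] using hS.SImp_mem h' h
    have h₂ : (x', |y|) ∈ S := by
      simpa only [SImp_eq_neg_left_of_abs_lt (by rwa [abs_neg, abs_neg] : |-x| < |-x'|),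
        SImp_self, abs_neg, neg_neg] using hS.SImp_mem (hS.neg_mem h') (hS.neg_mem h)
    have hpos : 0 < |y| := by omega
    have := (hS.pos_iff_pos_of_spread_lt h₁ hy').2 hpos
    have := (hS.pos_iff_pos_of_spread_lt h₂ hy').2 hpos
    omega
  rcases lt_trichotomy |x| |x'| with hlt | heq | hgt
  · exact (key h h' hlt).elim
  · have := hS.pos_iff_pos_of_spread_lt h hy
    have := hS.pos_iff_pos_of_spread_lt h' hy
    have := (hS.ne_zero h).1
    rcases abs_eq_abs.1 heq with e | e
    · exact e
    · omega
  · exact (key h' h hgt).elim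

lemma lt_iff_lt_of_spread_lt (hS : Subalg2 (Zeven n) S) (h : (x, y) ∈ S)
    (hy : (spread n S : ℤ) < |y|) (h' : (x', y') ∈ S) (hy' : (spread n S : ℤ) < |y'|) :
    x < x' ↔ y < y' := by
  refine ⟨fun hx => (hS.le_of_le_of_spread_lt h h' hy' hx.le).lt_of_ne fun e => ?_,
    fun hy₀ => lt_of_not_ge fun hx => (hS.le_of_le_of_spread_lt h' h hy hx).not_gt hy₀⟩
  exact hx.ne (hS.fst_unique_of_spread_lt h (e ▸ h') hy)

lemma abs_lt_abs_of_spread_lt (hS : Subalg2 (Zeven n) S) (h : (x, y) ∈ S)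
    (hy : |y| ≤ spread n S) (h' : (x', y') ∈ S) (hy' : (spread n S : ℤ) < |y'|) :
    |x| < |x'| := by
  by_contra hle
  have hyy : |(|y|)| < |y'| := by rw [abs_abs]; exact hy.trans_lt hy'
  have hxx : SImp x' |x| = |x| :=
    SImp_eq_right_of_abs_le_of_nonneg (by rw [abs_abs]; exact not_lt.1 hle) (abs_nonneg x)
  have h₁ : (|x|, -y') ∈ S := by
    simpa only [hxx, SImp_eq_neg_left_of_abs_lt hyy] using hS.SImp_mem h' (hS.abs_mem h)
  have := congrArg abs (hS.snd_unique_of_spread_lt h₁ (by rwa [abs_neg]) (hS.abs_mem h))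
  rw [abs_abs, abs_neg] at this
  omega

lemma abs_le_smallBound (hS : Subalg2 (Zeven n) S) (h : (x, y) ∈ S) (hy : |y| ≤ spread n S) :
    |x| ≤ smallBound n S := by
  classical
  have hsmall : (∃ y, (((x.natAbs : ℕ) : ℤ), y) ∈ S) ∧
      ∀ y', (((x.natAbs : ℕ) : ℤ), y') ∈ S → |y'| ≤ spread n S := by
    rw [Int.natCast_natAbs]
    refine ⟨⟨|y|, hS.abs_mem h⟩, fun y' h' => le_of_not_gt fun hy' => ?_⟩
    have := hS.snd_unique_of_spread_lt h' hy' (hS.abs_mem h)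
    rw [← this, abs_abs] at hy'
    omega
  rw [← Int.natCast_natAbs]
  exact_mod_cast Nat.le_findGreatest (natAbs_le_of_mem_Zeven (hS.2.1 h).1) hsmall

lemma smallBound_lt_abs (hS : Subalg2 (Zeven n) S) (h : (x, y) ∈ S)
    (hy : (spread n S : ℤ) < |y|) : (smallBound n S : ℤ) < |x| := by
  classical
  rcases eq_or_ne (smallBound n S) 0 with h₀ | h₀
  · rw [h₀, Nat.cast_zero]
    exact abs_pos.2 (hS.ne_zero h).1
  · obtain ⟨⟨y₀, hy₀⟩, hsmall⟩ := Nat.findGreatest_of_ne_zero (m := smallBound n S) rfl h₀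
    simpa only [Nat.abs_cast] using hS.abs_lt_abs_of_spread_lt hy₀ (hsmall y₀ hy₀) h hy

lemma isOddMonoGraph_bigPart (hS : Subalg2 (Zeven n) S) :
    IsOddMonoGraph n (smallBound n S) (spread n S) (bigPart n S) where
  subset _ hp := hS.2.1 hp.1
  neg_mem _ hp := ⟨hS.neg_mem hp.1, by rw [Prod.snd_neg, abs_neg]; exact hp.2⟩
  lt_abs_fst _ hp := hS.smallBound_lt_abs hp.1 hp.2
  lt_abs_snd _ hp := hp.2
  lt_iff_lt _ hp _ hq := hS.lt_iff_lt_of_spread_lt hp.1 hp.2 hq.1 hq.2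

end Subalg2

end Subalgebra

section Maximal

variable {n : ℕ} {S : Set (ℤ × ℤ)} {U U' : Set ℤ}

namespace Subalg2

lemma subset_bigPart_union_block (hS : Subalg2 (Zeven n) S) :
    S ⊆ bigPart n S ∪ Zeven (smallBound n S) ×ˢ Zeven (spread n S) := by
  rintro ⟨x, y⟩ h
  rcases lt_or_ge (spread n S : ℤ) |y| with hy | hy
  · exact Or.inl ⟨h, hy⟩
  · obtain ⟨hx, hy₀⟩ := hS.2.1 h
    rw [mem_Zeven_iff] at hx hy₀
    exact Or.inr ⟨mem_Zeven_iff.2 ⟨hx.1, hS.abs_le_smallBound h hy⟩, mem_Zeven_iff.2 ⟨hy₀.1, hy⟩⟩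

lemma opClosed_bigPart (hS : Subalg2 (Zeven n) S) : OpClosed (bigPart n S) := by
  intro p hp q hq
  set B : Set ℤ := {y | (spread n S : ℤ) < |y|}
  have hB : ∀ y ∈ B, -y ∈ B := fun y hy => by rwa [mem_ofPred_eq, abs_neg]
  obtain ⟨hinf, hsup, hneg, hSImp⟩ := hS.2.2 p hp.1 q hq.1
  exact ⟨⟨hinf, min_rec' (· ∈ B) hp.2 hq.2⟩, ⟨hsup, max_rec' (· ∈ B) hp.2 hq.2⟩,
    ⟨hneg, hB _ hp.2⟩, ⟨hSImp, _root_.SImp_mem hB hp.2 hq.2⟩⟩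

lemma subalg2_bigPart_union_block (hS : Subalg2 (Zeven n) S) :
    Subalg2 (Zeven n) (bigPart n S ∪ Zeven (smallBound n S) ×ˢ Zeven (spread n S)) := by
  refine ⟨hS.1.mono hS.subset_bigPart_union_block,
    union_subset (fun p hp => hS.2.1 hp.1)
      (prod_mono (Zeven_mono smallBound_le) (Zeven_mono spread_le)),
    hS.opClosed_bigPart.union (opClosed_prod (fun _ => neg_mem_Zeven) fun _ => neg_mem_Zeven) ?_⟩
  rintro p hp q ⟨hq₁, hq₂⟩
  rw [mem_Zeven_iff] at hq₁ hq₂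
  exact ⟨hq₁.2.trans_lt (hS.smallBound_lt_abs hp.1 hp.2), hq₂.2.trans_lt hp.2,
    hS.pos_iff_pos_of_spread_lt hp.1 hp.2⟩

lemma smallBound_neg_spread_mem (hS : Subalg2 (Zeven n) S) {x : ℤ}
    (h : (x, (spread n S : ℤ)) ∈ S) (hx : |x| < smallBound n S) :
    ((smallBound n S : ℤ), -(spread n S : ℤ)) ∈ S := by
  classical
  have hxa : |x| < |(smallBound n S : ℤ)| := by rwa [Nat.abs_cast]
  obtain ⟨⟨y, hy⟩, hsmall⟩ :=
    Nat.findGreatest_of_ne_zero (m := smallBound n S) rfl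
      (by have := abs_nonneg x; omega)
  rcases eq_or_ne y (spread n S) with rfl | hne
  · simpa only [SImp_eq_neg_left_of_abs_lt hxa, SImp_self, Nat.abs_cast, neg_neg]
      using hS.neg_mem (hS.SImp_mem hy h)
  · have hle : |y| ≤ |(spread n S : ℤ)| := by rw [Nat.abs_cast]; exact hsmall y hy
    simpa only [SImp_eq_right_of_abs_lt hxa, SImp_eq_neg_left_of_abs_le_of_ne hle hne.symm]
      using hS.SImp_mem h hy

lemma block_subset (hS : Subalg2 (Zeven n) S) (hU : IsUpperSet U) (hU' : IsUpperSet U')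
    (hsub : S ⊆ {p | p.1 ∈ U → p.2 ∈ U'}) :
    Zeven (smallBound n S) ×ˢ Zeven (spread n S) ⊆ {p | p.1 ∈ U → p.2 ∈ U'} := by
  rintro ⟨x, y⟩ ⟨hx, hy⟩ hxU
  rw [mem_Zeven_iff] at hx hy
  obtain ⟨x₀, hx₀, h, h'⟩ := hS.exists_of_spread_ne_zero (by grind)
  suffices -(spread n S : ℤ) ∈ U' from hU' (neg_le_of_abs_le hy.2) this
  have haU : (smallBound n S : ℤ) ∈ U := hU ((le_abs_self x).trans hx.2) hxU
  by_cases hx₀U : x₀ ∈ U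
  · exact hsub h' hx₀U
  · have hx₀a : |x₀| < smallBound n S := by
      rw [abs_of_pos hx₀]
      exact lt_of_not_ge fun hle => hx₀U (hU hle haU)
    exact hsub (hS.smallBound_neg_spread_mem h hx₀a) haU

lemma spread_eq_zero (hS : Subalg2 (Zeven n) S) (hsub : S ⊆ {p | p.1 ∈ U → p.2 ∈ U'})
    (hU : ∀ x, 0 < x → x ∈ U) (hU' : ∀ y ∈ U', 0 < y) : spread n S = 0 := by
  by_contra hm
  obtain ⟨x, hx, -, h⟩ := hS.exists_of_spread_ne_zero hm
  have := hU' _ (hsub h (hU x hx))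
  omega

end Subalg2

theorem eq_bigPart_union_block_of_maximal (hU : IsUpperSet U) (hU' : IsUpperSet U')
    (hS : Maximal (fun T => Subalg2 (Zeven n) T ∧ T ⊆ {p | p.1 ∈ U → p.2 ∈ U'}) S) :
    S = bigPart n S ∪ Zeven (smallBound n S) ×ˢ Zeven (spread n S) :=
  hS.eq_of_subset ⟨hS.prop.1.subalg2_bigPart_union_block,
      union_subset ((sep_subset _ _).trans hS.prop.2) (hS.prop.1.block_subset hU hU' hS.prop.2)⟩
    hS.prop.1.subset_bigPart_union_block

end Maximal

namespace IsBeta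

variable {n : ℕ} {ω ω' : ℤ → ℤ}

lemma eq_zero_or_eq_one (hω : IsBeta n ω) (a : ℤ) : ω a = 0 ∨ ω a = 1 := by
  rcases hω with rfl | ⟨i, -, -, rfl⟩ | ⟨i, -, -, rfl⟩ <;> simp only [betaF, betaM, betaP] <;>
    split_ifs <;> simp

lemma isUpperSet (hω : IsBeta n ω) : IsUpperSet {a | ω a = 1} := by
  intro a b hab ha
  rcases hω with rfl | ⟨i, -, -, rfl⟩ | ⟨i, -, -, rfl⟩ <;>
    simp only [mem_ofPred_eq, betaF, betaM, betaP] at ha ⊢ <;> split_ifs at ha ⊢ <;> omega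

lemma le_iff (hω : IsBeta n ω) (hω' : IsBeta n ω') (a b : ℤ) :
    ω a ≤ ω' b ↔ (ω a = 1 → ω' b = 1) := by
  rcases hω.eq_zero_or_eq_one a with h | h <;> rcases hω'.eq_zero_or_eq_one b with h' | h' <;>
    simp [h, h']

end IsBeta

lemma eq_one_of_pos {n : ℕ} {ω : ℤ → ℤ} (hω : ω = betaF ∨ IsBetaM n ω) {a : ℤ} (ha : 0 < a) :
    ω a = 1 := by
  rcases hω with rfl | ⟨i, -, -, rfl⟩ <;> simp only [betaF, betaM] <;> split_ifs <;> omega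

lemma pos_of_eq_one {n : ℕ} {ω : ℤ → ℤ} (hω : ω = betaF ∨ IsBetaP n ω) {a : ℤ} (ha : ω a = 1) :
    0 < a := by
  rcases hω with rfl | ⟨i, -, -, rfl⟩ <;> simp only [betaF, betaP] at ha <;> split_ifs at ha <;>
    omega

theorem stmt13_general (n : ℕ) (ω ω' : ℤ → ℤ) (hω : IsBeta n ω) (hω' : IsBeta n ω')
    (S : Set (ℤ × ℤ)) (hS : Subalg2 (Zeven n) S)
    (hsub : ∀ p ∈ S, ω p.1 ≤ ω' p.2)
    (hmax : ∀ S' : Set (ℤ × ℤ), Subalg2 (Zeven n) S' → (∀ p ∈ S', ω p.1 ≤ ω' p.2) →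
      S ⊆ S' → S' = S) :
    (∃ D : Set ℤ, ∃ h : ℤ → ℤ, ∃ m : ℕ, m ≤ n ∧ PartialEnd (Zeven n) D h ∧
      (S = {p : ℤ × ℤ | p.1 ∈ Zeven n ∧ p.2 ∈ Zeven n ∧ p.1 ∈ D ∧ eqm m (h p.1) p.2} ∨
        S = {p : ℤ × ℤ | p.1 ∈ Zeven n ∧ p.2 ∈ Zeven n ∧ p.2 ∈ D ∧ eqm m (h p.2) p.1})) ∧
    ((ω = betaF ∨ IsBetaM n ω) → (ω' = betaF ∨ IsBetaP n ω') →
      ∃ D : Set ℤ, ∃ h : ℤ → ℤ, PartialEnd (Zeven n) D h ∧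
        S = {p : ℤ × ℤ | p.1 ∈ D ∧ p.2 = h p.1}) := by
  have hR : {p : ℤ × ℤ | ω p.1 ≤ ω' p.2} = {p | p.1 ∈ {a | ω a = 1} → p.2 ∈ {b | ω' b = 1}} :=
    Set.ext fun p => hω.le_iff hω' p.1 p.2
  have hSmax : Maximal (fun T => Subalg2 (Zeven n) T ∧
      T ⊆ {p | p.1 ∈ {a | ω a = 1} → p.2 ∈ {b | ω' b = 1}}) S := by
    rw [← hR]
    exact ⟨⟨hS, hsub⟩, fun T hT hST => (hmax T hT.1 hT.2 hST).le⟩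
  have hSG := eq_bigPart_union_block_of_maximal hω.isUpperSet hω'.isUpperSet hSmax
  have hG := hS.isOddMonoGraph_bigPart
  refine ⟨?_, fun hωM hω'P => ?_⟩
  · rw [hSG]
    exact hG.exists_form smallBound_le spread_le (hS.1.mono hS.subset_bigPart_union_block)
  · have hm := hS.spread_eq_zero hSmax.prop.2 (fun _ => eq_one_of_pos hωM)
      (fun _ => pos_of_eq_one hω'P)
    rw [hm, Zeven_zero, prod_empty, union_empty] at hSG
    rw [hm] at hG
    rw [hSG]
    exact hG.exists_graph (hS.1.mono hSG.subset)

theorem stmt13 (n : ℕ) (hn : 2 ≤ n) (ω ω' : ℤ → ℤ) (hω : IsBeta n ω) (hω' : IsBeta n ω')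
    (S : Set (ℤ × ℤ)) (hS : Subalg2 (Zeven n) S)
    (hsub : ∀ p ∈ S, ω p.1 ≤ ω' p.2)
    (hmax : ∀ S' : Set (ℤ × ℤ), Subalg2 (Zeven n) S' → (∀ p ∈ S', ω p.1 ≤ ω' p.2) →
      S ⊆ S' → S' = S) :
    (∃ D : Set ℤ, ∃ h : ℤ → ℤ, ∃ m : ℕ, m ≤ n ∧ PartialEnd (Zeven n) D h ∧
      (S = {p : ℤ × ℤ | p.1 ∈ Zeven n ∧ p.2 ∈ Zeven n ∧ p.1 ∈ D ∧ eqm m (h p.1) p.2} ∨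
        S = {p : ℤ × ℤ | p.1 ∈ Zeven n ∧ p.2 ∈ Zeven n ∧ p.2 ∈ D ∧ eqm m (h p.2) p.1})) ∧
    ((ω = betaF ∨ IsBetaM n ω) → (ω' = betaF ∨ IsBetaP n ω') →
      ∃ D : Set ℤ, ∃ h : ℤ → ℤ, PartialEnd (Zeven n) D h ∧
        S = {p : ℤ × ℤ | p.1 ∈ D ∧ p.2 = h p.1}) :=
  stmt13_general n ω ω' hω hω' S hS hsub hmax
end

section
/- Let n ≥ 1 and suppose φ : Y → Y satisfies: φ((0,…,0)) = (0,…,0), and for each e ∈ {f_0,…,f_n, g} and each 𝐮 ∈ Y all of whose coordinates lie in dom e, all coordinates of φ(𝐮) lie in dom e and φ(e·𝐮) = e·φ(𝐮), where e·𝐮 denotes the coordinatewise action. If 𝐛_{n+1} = (0,1,…,n) lies in the image of φ, then φ is the identity map on Y. -/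
/-- The endomorphism `g` of `Z_{2n+1}`, as a total function on `ℤ`. -/
def gOFun (a : ℤ) : ℤ := if 0 < a then a - 1 else if a < 0 then a + 1 else 0

/-- The underlying function of the partial endomorphism `f_i` of `Z_{2n+1}`. -/
def fOFun (i : ℕ) (a : ℤ) : ℤ :=
  if 2 ≤ i then
    (if a = (i : ℤ) - 1 then (i : ℤ) else if a = -((i : ℤ) - 1) then -(i : ℤ) else a)
  else a

/-- The domain of the partial endomorphism `f_i` of `Z_{2n+1}`. -/
def fODom (n i : ℕ) : Set ℤ := Zodd n \ {(i : ℤ), -(i : ℤ)}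

/-- The maps `f_0, …, f_n, g` on `Z_{2n+1}`, as pairs (domain, function). -/
def MapsOdd (n : ℕ) : Set (Set ℤ × (ℤ → ℤ)) :=
  {e | (∃ i : ℕ, i ≤ n ∧ e = (fODom n i, fOFun i)) ∨ e = (Zodd n, gOFun)}

/-- The test space `Y` for the odd case, as a set of `(n+1)`-tuples. -/
def YOdd (n : ℕ) : Set (Fin (n + 1) → ℤ) :=
  {u | (∀ i, u i ∈ Zodd n) ∧
    ∃ j : Fin (n + 1), 0 ≤ u j ∧ (∀ i, i ≤ j → u i = u j) ∧
      ∀ k l : Fin (n + 1), j ≤ k → k < l → u k < u l}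

/-- The tuples `𝐛_1, …, 𝐛_{n+1}` in `Y` (odd case); here `1 ≤ k ≤ n+1`. -/
def bOdd (n k : ℕ) : Fin (n + 1) → ℤ :=
  if k = n + 1 then fun p => ((p : ℕ) : ℤ)
  else fun p => max 1 (((p : ℕ) : ℤ) - ((n : ℤ) - (k : ℤ)))

/-!
First, `φ` fixes `𝐛 = (0,1,…,n)`: if `φ u = 𝐛` then `u` takes every value `i ≤ n`, since
otherwise `u`, hence `φ u`, would lie in `dom f_i`; a monotone tuple of length `n+1` with this property is `𝐛`. Applying `g` repeatedly,
`φ` fixes every ramp `(0,…,0,1,2,…)`. An arbitrary `u ∈ Y` is then reached by induction on the sum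
of its entries: if `u` has a jump of at least two, lowering the top of the jump gives a tuple `w`
with `f_i w = u`; if `u` has no jump and no zero entry, `u - 1 = g u` and `φ u` avoids `0`
(because `u ∈ dom f_0`), so `g` can be cancelled; otherwise `u` is a ramp.
-/

open Finset

theorem gOFun_of_pos {a : ℤ} (ha : 0 < a) : gOFun a = a - 1 := if_pos ha

theorem gOFun_max_zero (a : ℤ) : gOFun (max 0 a) = max 0 (a - 1) := by
  unfold gOFun
  split_ifs <;> omega

theorem fOFun_sub_one {i : ℕ} (hi : 2 ≤ i) : fOFun i ((i : ℤ) - 1) = i := by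
  simp [fOFun, hi]

theorem fOFun_of_ne {i : ℕ} {a : ℤ} (h₁ : a ≠ (i : ℤ) - 1) (h₂ : a ≠ -((i : ℤ) - 1)) :
    fOFun i a = a := by
  unfold fOFun
  split_ifs <;> omega

theorem sum_toNat_lt_sum_toNat {ι : Type*} [Fintype ι] {u v : ι → ℤ} (hle : ∀ p, v p ≤ u p)
    {q : ι} (hq : v q < u q) (hq₀ : 0 ≤ v q) : ∑ p, (v p).toNat < ∑ p, (u p).toNat :=
  sum_lt_sum (fun p _ => Int.toNat_le_toNat (hle p)) ⟨q, mem_univ q, by omega⟩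

section YOdd

variable {n : ℕ} {u : Fin (n + 1) → ℤ}

theorem nonneg_of_mem_YOdd (hu : u ∈ YOdd n) (p : Fin (n + 1)) : 0 ≤ u p := by
  obtain ⟨-, j, hj, hplat, hstrict⟩ := hu
  rcases le_or_gt p j with h | h
  · exact (hplat p h).symm ▸ hj
  · exact hj.trans (hstrict j p le_rfl h).le

theorem monotone_of_mem_YOdd (hu : u ∈ YOdd n) : Monotone u := by
  obtain ⟨-, j, -, hplat, hstrict⟩ := hu
  intro a b hab
  rcases hab.eq_or_lt with rfl | hab
  · rfl
  rcases le_or_gt b j with hb | hb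
  · rw [hplat a (hab.le.trans hb), hplat b hb]
  rcases le_or_gt j a with ha | ha
  · exact (hstrict a b ha hab).le
  · rw [hplat a ha.le]
    exact (hstrict j b le_rfl hb).le

theorem apply_lt_apply_of_mem_YOdd (hu : u ∈ YOdd n) {a b c : Fin (n + 1)} (hab : a < b)
    (hbc : b < c) (h : u a < u b) : u b < u c := by
  obtain ⟨-, j, -, hplat, hstrict⟩ := hu
  refine hstrict b c ?_ hbc
  by_contra! hbj
  rw [hplat a (hab.trans hbj).le, hplat b hbj.le] at h
  exact lt_irrefl _ h

theorem mem_fODom_of_mem_YOdd (hu : u ∈ YOdd n) {i : ℕ} {p : Fin (n + 1)} (hne : u p ≠ i) :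
    u p ∈ fODom n i := by
  have := nonneg_of_mem_YOdd hu p
  refine ⟨hu.1 p, ?_⟩
  simp only [Set.mem_insert_iff, Set.mem_singleton_iff]
  omega

theorem sub_one_mem_YOdd (hu : u ∈ YOdd n) (hpos : ∀ p, 0 < u p) :
    (fun p => u p - 1) ∈ YOdd n := by
  obtain ⟨hZ, j, -, hplat, hstrict⟩ := hu
  refine ⟨fun p => ?_, j, ?_, fun i hi => ?_, fun a b ha hab => ?_⟩
  · obtain ⟨h₁, h₂⟩ := hZ p
    have := hpos p
    exact ⟨by dsimp only; omega, by dsimp only; omega⟩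
  · exact Int.sub_nonneg_of_le (hpos j)
  · simp only [hplat i hi]
  · simpa using hstrict a b ha hab

theorem apply_lt_or_lt_of_ne_succ (hu : u ∈ YOdd n) {k : Fin n}
    (hk : u k.castSucc + 2 ≤ u k.succ) {p : Fin (n + 1)} (hp : p ≠ k.succ) :
    u p < u k.succ - 1 ∨ u k.succ < u p := by
  rcases hp.lt_or_gt with hp | hp
  · have := monotone_of_mem_YOdd hu (Fin.le_castSucc_iff.mpr hp)
    omega
  · exact Or.inr (apply_lt_apply_of_mem_YOdd hu Fin.castSucc_lt_succ hp (by omega))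

theorem update_succ_mem_YOdd (hu : u ∈ YOdd n) {k : Fin n} (hk : u k.castSucc + 2 ≤ u k.succ) :
    Function.update u k.succ (u k.succ - 1) ∈ YOdd n := by
  have hmono := monotone_of_mem_YOdd hu
  have hk₀ := nonneg_of_mem_YOdd hu k.castSucc
  obtain ⟨hZ, j, hj, hplat, hstrict⟩ := hu
  have hjk : j ≤ k.castSucc := by
    by_contra! h
    rw [hplat k.succ (Fin.castSucc_lt_iff_succ_le.mp h), ← hplat _ h.le] at hk
    omega
  have hne : ∀ p ≤ j, p ≠ k.succ := fun p hp =>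
    (hp.trans_lt (hjk.trans_lt Fin.castSucc_lt_succ)).ne
  have hle : ∀ p, Function.update u k.succ (u k.succ - 1) p ≤ u p := by
    intro p
    rcases eq_or_ne p k.succ with rfl | hp <;> simp [*]
  refine ⟨fun p => ?_, j, ?_, fun i hi => ?_, fun a b ha hab => ?_⟩
  · rcases eq_or_ne p k.succ with rfl | hp
    · have := (hZ k.succ).2
      simp only [Function.update_self]
      exact ⟨by omega, by omega⟩
    · simpa [hp] using hZ p
  · simpa [hne j le_rfl] using hj
  · simp only [Function.update_of_ne (hne i hi), Function.update_of_ne (hne j le_rfl), hplat i hi]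
  · rcases eq_or_ne b k.succ with rfl | hb
    · have := hmono (Fin.le_castSucc_iff.mpr hab)
      have := hle a
      simp only [Function.update_self]
      omega
    · simp only [Function.update_of_ne hb]
      exact (hle a).trans_lt (hstrict a b ha hab)

end YOdd

def ramp (n j : ℕ) : Fin (n + 1) → ℤ := fun p => max 0 (((p : ℕ) : ℤ) - j)

theorem ramp_zero (n : ℕ) : ramp n 0 = fun p : Fin (n + 1) => ((p : ℕ) : ℤ) := by
  ext p
  simp [ramp]

theorem gOFun_comp_ramp (n j : ℕ) : gOFun ∘ ramp n j = ramp n (j + 1) := by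
  ext p
  simp only [Function.comp_apply, ramp, gOFun_max_zero]
  push_cast
  ring_nf

theorem ramp_mem_YOdd (n j : ℕ) : ramp n j ∈ YOdd n := by
  refine ⟨fun p => ?_, ⟨min j n, by omega⟩, ?_, fun i hi => ?_, fun a b ha hab => ?_⟩
  · simp only [ramp, Zodd, Set.mem_ofPred_eq]
    omega
  · simp [ramp]
  · replace hi : (i : ℕ) ≤ min j n := hi
    simp only [ramp]
    omega
  · replace ha : min j n ≤ (a : ℕ) := ha
    rw [Fin.lt_def] at hab
    simp only [ramp]
    omega

theorem eq_ramp_of_forall_succ_le {n : ℕ} {u : Fin (n + 1) → ℤ} (hu : u ∈ YOdd n) (h₀ : u 0 = 0)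
    (hstep : ∀ k : Fin n, u k.succ ≤ u k.castSucc + 1) : ∃ j, u = ramp n j := by
  obtain ⟨-, j, -, hplat, hstrict⟩ := hu
  refine ⟨j, funext fun p => ?_⟩
  induction p using Fin.induction with
  | zero => simp [ramp, h₀]
  | succ k ih =>
    rcases le_or_gt k.succ j with hk | hk
    · rw [hplat _ hk, ← hplat 0 (Fin.zero_le j), h₀]
      simp only [Fin.le_def, Fin.val_succ] at hk
      simp only [ramp, Fin.val_succ]
      omega
    · have := hstrict _ _ (Fin.le_castSucc_iff.mpr hk) Fin.castSucc_lt_succ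
      have := hstep k
      simp only [Fin.lt_def, Fin.val_succ] at hk
      simp only [ramp, Fin.val_succ, Fin.val_castSucc] at ih ⊢
      omega

theorem eq_val_of_Icc_subset_range {n : ℕ} {u : Fin (n + 1) → ℤ} (hu : u ∈ YOdd n)
    (hrange : Set.Icc (0 : ℤ) n ⊆ Set.range u) : u = fun p : Fin (n + 1) => ((p : ℕ) : ℤ) := by
  have himage : univ.image u = Icc (0 : ℤ) n := by
    ext x
    simp only [mem_image, mem_univ, true_and, mem_Icc]
    constructor
    · rintro ⟨p, rfl⟩
      exact ⟨nonneg_of_mem_YOdd hu p, (hu.1 p).2⟩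
    · exact fun hx => hrange hx
  have hcard : (Icc (0 : ℤ) n).card = n + 1 := by simp
  have hinj : Function.Injective u := by
    have := card_image_iff.mp (by rw [himage, hcard, card_univ, Fintype.card_fin])
    rwa [coe_univ, Set.injOn_univ] at this
  have hmem : ∀ p, u p ∈ Icc (0 : ℤ) n := fun p => himage ▸ mem_image_of_mem u (mem_univ p)
  refine (orderEmbOfFin_unique hcard hmem
    ((monotone_of_mem_YOdd hu).strictMono_of_injective hinj)).trans
    (orderEmbOfFin_unique hcard (fun p => ?_) (Nat.strictMono_cast.comp Fin.val_strictMono)).symm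
  simp only [Function.comp_apply, mem_Icc]
  omega

def PreservesMaps (n : ℕ) (φ : (Fin (n + 1) → ℤ) → Fin (n + 1) → ℤ) : Prop :=
  ∀ e ∈ MapsOdd n, ∀ u ∈ YOdd n, (∀ p, u p ∈ e.1) →
    (∀ p, φ u p ∈ e.1) ∧ φ (fun p => e.2 (u p)) = fun p => e.2 (φ u p)

namespace PreservesMaps

variable {n : ℕ} {φ : (Fin (n + 1) → ℤ) → Fin (n + 1) → ℤ} {u : Fin (n + 1) → ℤ}

theorem apply_ne (h : PreservesMaps n φ) {i : ℕ} (hi : i ≤ n) (hu : u ∈ YOdd n)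
    (hne : ∀ p, u p ≠ i) (p : Fin (n + 1)) : φ u p ≠ i := fun hp =>
  ((h _ (Or.inl ⟨i, hi, rfl⟩) u hu fun q => mem_fODom_of_mem_YOdd hu (hne q)).1 p).2 (Or.inl hp)

theorem map_fOFun (h : PreservesMaps n φ) {i : ℕ} (hi : i ≤ n) (hu : u ∈ YOdd n)
    (hne : ∀ p, u p ≠ i) : φ (fOFun i ∘ u) = fOFun i ∘ φ u :=
  (h _ (Or.inl ⟨i, hi, rfl⟩) u hu fun q => mem_fODom_of_mem_YOdd hu (hne q)).2

theorem map_gOFun (h : PreservesMaps n φ) (hu : u ∈ YOdd n) : φ (gOFun ∘ u) = gOFun ∘ φ u :=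
  (h _ (Or.inr rfl) u hu hu.1).2

theorem apply_ramp_zero (h : PreservesMaps n φ) (hsurj : ∃ u ∈ YOdd n, φ u = ramp n 0) :
    φ (ramp n 0) = ramp n 0 := by
  obtain ⟨u, hu, hφu⟩ := hsurj
  suffices u = ramp n 0 from this ▸ hφu
  rw [ramp_zero] at hφu ⊢
  refine eq_val_of_Icc_subset_range hu fun i ⟨hi₀, hin⟩ => ?_
  by_contra hi
  lift i to ℕ using hi₀
  have := h.apply_ne (by omega) hu (fun p hp => hi ⟨p, hp⟩) ⟨i, by omega⟩
  simp [hφu] at this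

theorem apply_ramp (h : PreservesMaps n φ) (h₀ : φ (ramp n 0) = ramp n 0) (j : ℕ) :
    φ (ramp n j) = ramp n j := by
  induction j with
  | zero => exact h₀
  | succ j ih => rw [← gOFun_comp_ramp, h.map_gOFun (ramp_mem_YOdd n j), ih]

theorem apply_eq_self_of_update_succ (h : PreservesMaps n φ) (hu : u ∈ YOdd n) {k : Fin n}
    (hk : u k.castSucc + 2 ≤ u k.succ)
    (hw : φ (Function.update u k.succ (u k.succ - 1)) = Function.update u k.succ (u k.succ - 1)) :
    φ u = u := by
  set w := Function.update u k.succ (u k.succ - 1)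
  have hk₀ := nonneg_of_mem_YOdd hu k.castSucc
  obtain ⟨i, hi⟩ : ∃ i : ℕ, u k.succ = i := ⟨(u k.succ).toNat, by omega⟩
  have hin : i ≤ n := by have := (hu.1 k.succ).2; omega
  have hwi : ∀ p, w p ≠ i := by
    intro p
    rcases eq_or_ne p k.succ with rfl | hp
    · simp [w, hi]
    · have := apply_lt_or_lt_of_ne_succ hu hk hp
      simp only [w, Function.update_of_ne hp]
      omega
  have hfw : fOFun i ∘ w = u := by
    ext p
    rcases eq_or_ne p k.succ with rfl | hp
    · simp [w, hi, fOFun_sub_one (show 2 ≤ i by omega)]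
    · have := apply_lt_or_lt_of_ne_succ hu hk hp
      have := nonneg_of_mem_YOdd hu p
      simp only [Function.comp_apply, w, Function.update_of_ne hp]
      exact fOFun_of_ne (by omega) (by omega)
  rw [← hfw, h.map_fOFun hin (update_succ_mem_YOdd hu hk) hwi, hw]

theorem apply_eq_self_of_pos (h : PreservesMaps n φ) (hu : u ∈ YOdd n) (hφu : φ u ∈ YOdd n)
    (hpos : ∀ p, 0 < u p) (hsub : φ (fun p => u p - 1) = fun p => u p - 1) : φ u = u := by
  have hg : gOFun ∘ u = fun p => u p - 1 := funext fun p => gOFun_of_pos (hpos p)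
  have hφpos : ∀ p, 0 < φ u p := fun p =>
    (nonneg_of_mem_YOdd hφu p).lt_of_ne
      (h.apply_ne (Nat.zero_le n) hu (fun q => by simpa using (hpos q).ne') p).symm
  have hcomm : gOFun ∘ φ u = fun p => u p - 1 := by rw [← h.map_gOFun hu, hg, hsub]
  ext p
  have := congrFun hcomm p
  rw [Function.comp_apply, gOFun_of_pos (hφpos p)] at this
  omega

theorem apply_eq_self (h : PreservesMaps n φ) (hmap : ∀ u ∈ YOdd n, φ u ∈ YOdd n)
    (h₀ : φ (ramp n 0) = ramp n 0) (hu : u ∈ YOdd n) : φ u = u := by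
  induction hm : ∑ p, (u p).toNat using Nat.strong_induction_on generalizing u with
  | _ m ih =>
  subst hm
  by_cases hjump : ∃ k : Fin n, u k.castSucc + 2 ≤ u k.succ
  · obtain ⟨k, hk⟩ := hjump
    have hk₀ := nonneg_of_mem_YOdd hu k.castSucc
    refine h.apply_eq_self_of_update_succ hu hk (ih _ ?_ (update_succ_mem_YOdd hu hk) rfl)
    refine sum_toNat_lt_sum_toNat (fun p => ?_) (q := k.succ) (by simp) (by simp; omega)
    rcases eq_or_ne p k.succ with rfl | hp <;> simp [*]
  simp only [not_exists, not_le] at hjump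
  by_cases hu₀ : u 0 = 0
  · obtain ⟨j, rfl⟩ := eq_ramp_of_forall_succ_le hu hu₀ fun k => by have := hjump k; omega
    exact h.apply_ramp h₀ j
  have hpos : ∀ p, 0 < u p := fun p =>
    ((nonneg_of_mem_YOdd hu 0).lt_of_ne (Ne.symm hu₀)).trans_le
      (monotone_of_mem_YOdd hu (Fin.zero_le p))
  refine h.apply_eq_self_of_pos hu (hmap u hu) hpos (ih _ ?_ (sub_one_mem_YOdd hu hpos) rfl)
  exact sum_toNat_lt_sum_toNat (fun p => by omega) (q := 0) (by omega) (by have := hpos 0; omega)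

end PreservesMaps

theorem stmt15_general (n : ℕ)
    (φ : (Fin (n + 1) → ℤ) → (Fin (n + 1) → ℤ))
    (hmap : ∀ u ∈ YOdd n, φ u ∈ YOdd n)
    (hpres : ∀ e ∈ MapsOdd n, ∀ u ∈ YOdd n, (∀ p, u p ∈ e.1) →
      (∀ p, φ u p ∈ e.1) ∧ φ (fun p => e.2 (u p)) = fun p => e.2 (φ u p))
    (hsurj : ∃ u ∈ YOdd n, φ u = bOdd n (n + 1)) :
    ∀ u ∈ YOdd n, φ u = u := by
  have hb : bOdd n (n + 1) = ramp n 0 := by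
    rw [ramp_zero]
    simp [bOdd]
  rw [hb] at hsurj
  have h₀ := PreservesMaps.apply_ramp_zero hpres hsurj
  exact fun u hu => PreservesMaps.apply_eq_self hpres hmap h₀ hu

theorem stmt15 (n : ℕ) (hn : 1 ≤ n)
    (φ : (Fin (n + 1) → ℤ) → (Fin (n + 1) → ℤ))
    (hmap : ∀ u ∈ YOdd n, φ u ∈ YOdd n)
    (hzero : φ (fun _ => 0) = fun _ => 0)
    (hpres : ∀ e ∈ MapsOdd n, ∀ u ∈ YOdd n, (∀ p, u p ∈ e.1) →
      (∀ p, φ u p ∈ e.1) ∧ φ (fun p => e.2 (u p)) = fun p => e.2 (φ u p))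
    (hsurj : ∃ u ∈ YOdd n, φ u = bOdd n (n + 1)) :
    ∀ u ∈ YOdd n, φ u = u :=
  stmt15_general n φ hmap hpres hsurj
end
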